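/- Let H be a symmetric invertible real n×n matrix and let β : ℝ → [0,1] be a continuous function with β(t) = 0 for t ≤ 0 and β(t) = 1 for t ≥ 1. Consider the linear ODE x'(t) = β(t)·H·x(t) for x : ℝ → ℝⁿ. The set of solutions that are bounded on ℝ is a linear subspace whose dimension equals the number of negative eigenvalues of H (counted with multiplicity). -/

import Mathlib

/-!
In an eigenbasis of `H` the equation decouples into scalar equations `c' = β λ c`, solved by
`c t = exp (B t * λ) * c 0` with `B t = ∫ s in 0..t, β s`. The primitive `B` vanishes for `t ≤ 0`
and grows like `t` for `t ≥ 1`, so it is bounded below but not above. Hence a coordinate stays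
bounded exactly when `c 0 = 0` or `λ < 0`, and `x ↦ x 0` identifies the bounded solutions with the
span of the eigenvectors of negative eigenvalue.
-/

open Matrix Set Bornology Real

theorem eq_exp_mul_of_hasDerivAt {β B c : ℝ → ℝ} {μ : ℝ} (hB : ∀ t, HasDerivAt B (β t) t)
    (hB0 : B 0 = 0) (hc : ∀ t, HasDerivAt c (β t * μ * c t) t) (t : ℝ) :
    c t = exp (B t * μ) * c 0 := by
  have hconst : ∀ s, HasDerivAt (fun s => exp (B s * -μ) * c s) 0 s := fun s =>
    (((hB s).mul_const (-μ)).exp.fun_mul (hc s)).congr_deriv (by ring)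
  have h := is_const_of_deriv_eq_zero (fun s => (hconst s).differentiableAt)
    (fun s => (hconst s).deriv) t 0
  simp only [hB0, zero_mul, exp_zero, one_mul] at h
  rw [← h, ← mul_assoc, ← exp_add]
  simp

theorem isBounded_range_exp_mul_iff {B : ℝ → ℝ} {μ : ℝ} (c : ℝ) (hμ : μ ≠ 0)
    (hlow : BddBelow (range B)) (hup : ¬BddAbove (range B)) :
    IsBounded (range fun t => exp (B t * μ) * c) ↔ c = 0 ∨ μ < 0 := by
  simp only [isBounded_iff_forall_norm_le, forall_mem_range, norm_eq_abs, abs_mul, abs_exp]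
  constructor
  · rintro ⟨C, hC⟩
    by_contra! h
    have hμpos : 0 < μ := lt_of_le_of_ne h.2 hμ.symm
    have hcpos : 0 < |c| := abs_pos.mpr h.1
    refine hup ⟨(C / |c| - 1) / μ, forall_mem_range.mpr fun t => ?_⟩
    rw [le_div_iff₀ hμpos, le_sub_iff_add_le, le_div_iff₀ hcpos]
    exact (mul_le_mul_of_nonneg_right (add_one_le_exp _) hcpos.le).trans (hC t)
  · rintro (rfl | hμneg)
    · exact ⟨0, by simp⟩
    · obtain ⟨m, hm⟩ := hlow
      refine ⟨exp (m * μ) * |c|, fun t => ?_⟩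
      have : B t * μ ≤ m * μ := mul_le_mul_of_nonpos_right (hm (mem_range_self t)) hμneg.le
      gcongr

theorem Module.Basis.isBounded_range_iff {ι E α : Type*} [Fintype ι]
    [NormedAddCommGroup E] [NormedSpace ℝ E] (b : Module.Basis ι ℝ E) (x : α → E) :
    IsBounded (range x) ↔ ∀ i, IsBounded (range fun a => b.repr (x a) i) := by
  have : FiniteDimensional ℝ E := b.finiteDimensional_of_finite
  let e := b.equivFunL
  calc IsBounded (range x) ↔ IsBounded (range (e ∘ x)) := by
        refine ⟨fun h => ?_, fun h => ?_⟩
        · simpa only [range_comp] using e.lipschitz.isBounded_image h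
        · simpa only [range_comp, image_image, ContinuousLinearEquiv.symm_apply_apply,
            image_id'] using e.symm.lipschitz.isBounded_image h
    _ ↔ ∀ i, IsBounded (Function.eval i '' range (e ∘ x)) :=
        forall_isBounded_image_eval_iff.symm
    _ ↔ ∀ i, IsBounded (range fun a => b.repr (x a) i) := by
        simp only [← range_comp]; rfl

def boundedSolutions {E : Type*} [NormedAddCommGroup E] [NormedSpace ℝ E] (β : ℝ → ℝ)
    (T : E →ₗ[ℝ] E) : Submodule ℝ (ℝ → E) where
  carrier := {x | (∀ t, HasDerivAt x (β t • T (x t)) t) ∧ ∃ C, ∀ t, ‖x t‖ ≤ C}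
  zero_mem' := ⟨fun t => by simp, 0, by simp⟩
  add_mem' := by
    rintro x y ⟨hx, Cx, hCx⟩ ⟨hy, Cy, hCy⟩
    refine ⟨fun t => by simpa [smul_add] using (hx t).add (hy t), Cx + Cy, fun t => ?_⟩
    exact (norm_add_le _ _).trans (add_le_add (hCx t) (hCy t))
  smul_mem' := by
    rintro c x ⟨hx, C, hC⟩
    refine ⟨fun t => by simpa [smul_comm c] using (hx t).const_smul c, ‖c‖ * C, fun t => ?_⟩
    simpa [norm_smul] using mul_le_mul_of_nonneg_left (hC t) (norm_nonneg c)

section Eigenbasis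

variable {ι E : Type*} [NormedAddCommGroup E] [NormedSpace ℝ E]
  (b : Module.Basis ι ℝ E) (L : ι → ℝ)

theorem Module.Basis.repr_apply_of_apply_eq_smul {T : E →ₗ[ℝ] E} (hT : ∀ i, T (b i) = L i • b i)
    (v : E) (i : ι) : b.repr (T v) i = L i * b.repr v i := by
  have : (b.coord i).comp T = L i • b.coord i := b.ext fun j => by
    classical
    by_cases h : j = i <;> simp [hT, h]
  simpa using LinearMap.congr_fun this v

variable [Fintype ι]

theorem Module.Basis.hasDerivAt_repr {x : ℝ → E} {x' : E} {t : ℝ} (hx : HasDerivAt x x' t)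
    (i : ι) : HasDerivAt (fun s => b.repr (x s) i) (b.repr x' i) t := by
  have : FiniteDimensional ℝ E := b.finiteDimensional_of_finite
  exact (LinearMap.toContinuousLinearMap (b.coord i)).hasFDerivAt.comp_hasDerivAt t hx

noncomputable def solutionMap (B : ℝ → ℝ) : E →ₗ[ℝ] ℝ → E where
  toFun x₀ t := ∑ i, (exp (B t * L i) * b.repr x₀ i) • b i
  map_add' x y := by
    funext t
    simp [mul_add, add_smul, Finset.sum_add_distrib]
  map_smul' c x := by
    funext t
    simp [Finset.smul_sum, smul_smul, mul_left_comm]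

variable {b L} {B β : ℝ → ℝ} {T : E →ₗ[ℝ] E}

theorem solutionMap_apply (x₀ : E) (t : ℝ) :
    solutionMap b L B x₀ t = ∑ i, (exp (B t * L i) * b.repr x₀ i) • b i :=
  rfl

theorem repr_solutionMap (x₀ : E) (t : ℝ) (i : ι) :
    b.repr (solutionMap b L B x₀ t) i = exp (B t * L i) * b.repr x₀ i :=
  congr_fun (b.repr_sum_self _) i

theorem solutionMap_apply_zero (hB0 : B 0 = 0) (x₀ : E) : solutionMap b L B x₀ 0 = x₀ :=
  b.ext_elem fun i => by simp [repr_solutionMap, hB0]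

theorem solutionMap_injective (hB0 : B 0 = 0) : Function.Injective (solutionMap b L B) :=
  fun x y h => by simpa [solutionMap_apply_zero hB0] using congr_fun h 0

theorem hasDerivAt_solutionMap (hT : ∀ i, T (b i) = L i • b i)
    (hB : ∀ t, HasDerivAt B (β t) t) (x₀ : E) (t : ℝ) :
    HasDerivAt (solutionMap b L B x₀) (β t • T (solutionMap b L B x₀ t)) t := by
  have hterm : ∀ i ∈ Finset.univ, HasDerivAt (fun s => (exp (B s * L i) * b.repr x₀ i) • b i)
      ((exp (B t * L i) * (β t * L i) * b.repr x₀ i) • b i) t := fun i _ =>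
    (((hB t).mul_const (L i)).exp.mul_const (b.repr x₀ i)).smul_const (b i)
  refine (HasDerivAt.fun_sum hterm).congr_deriv ?_
  simp only [solutionMap_apply, map_sum, map_smul, hT, Finset.smul_sum, smul_smul]
  exact Finset.sum_congr rfl fun i _ => by congr 1; ring

theorem eq_solutionMap_of_hasDerivAt (hT : ∀ i, T (b i) = L i • b i)
    (hB : ∀ t, HasDerivAt B (β t) t) (hB0 : B 0 = 0)
    {x : ℝ → E} (hx : ∀ t, HasDerivAt x (β t • T (x t)) t) : x = solutionMap b L B (x 0) := by
  funext t
  refine b.ext_elem fun i => ?_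
  rw [repr_solutionMap]
  refine eq_exp_mul_of_hasDerivAt (c := fun s => b.repr (x s) i) hB hB0 (fun s => ?_) t
  simpa [b.repr_apply_of_apply_eq_smul L hT, mul_assoc] using b.hasDerivAt_repr (hx s) i

theorem isBounded_range_solutionMap_iff (hL : ∀ i, L i ≠ 0) (hlow : BddBelow (range B))
    (hup : ¬BddAbove (range B)) (x₀ : E) :
    IsBounded (range (solutionMap b L B x₀)) ↔ x₀ ∈ Submodule.span ℝ (b '' {i | L i < 0}) := by
  simp only [b.isBounded_range_iff, b.mem_span_image, repr_solutionMap,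
    isBounded_range_exp_mul_iff _ (hL _) hlow hup, subset_def, Finset.mem_coe,
    Finsupp.mem_support_iff, mem_ofPred_eq, or_iff_not_imp_left]

theorem boundedSolutions_eq_map (hT : ∀ i, T (b i) = L i • b i) (hL : ∀ i, L i ≠ 0)
    (hB : ∀ t, HasDerivAt B (β t) t) (hB0 : B 0 = 0)
    (hlow : BddBelow (range B)) (hup : ¬BddAbove (range B)) :
    boundedSolutions β T = (Submodule.span ℝ (b '' {i | L i < 0})).map (solutionMap b L B) := by
  ext x
  constructor
  · rintro ⟨hx, C, hC⟩
    have hx_eq := eq_solutionMap_of_hasDerivAt hT hB hB0 hx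
    refine ⟨x 0, (isBounded_range_solutionMap_iff hL hlow hup _).1 ?_, hx_eq.symm⟩
    rw [← hx_eq]
    exact isBounded_iff_forall_norm_le.2 ⟨C, forall_mem_range.2 hC⟩
  · rintro ⟨x₀, hx₀, rfl⟩
    obtain ⟨C, hC⟩ :=
      isBounded_iff_forall_norm_le.1 ((isBounded_range_solutionMap_iff hL hlow hup x₀).2 hx₀)
    exact ⟨hasDerivAt_solutionMap hT hB x₀, C, forall_mem_range.1 hC⟩

theorem finrank_boundedSolutions (hT : ∀ i, T (b i) = L i • b i) (hL : ∀ i, L i ≠ 0)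
    (hB : ∀ t, HasDerivAt B (β t) t) (hB0 : B 0 = 0)
    (hlow : BddBelow (range B)) (hup : ¬BddAbove (range B)) :
    Module.finrank ℝ (boundedSolutions β T) = (Finset.univ.filter fun i => L i < 0).card := by
  rw [boundedSolutions_eq_map hT hL hB hB0 hlow hup,
    ← (Submodule.equivMapOfInjective _ (solutionMap_injective hB0) _).finrank_eq,
    image_eq_range]
  exact (finrank_span_eq_card (b.linearIndependent.comp _ Subtype.val_injective)).trans
    (Fintype.card_subtype _)

end Eigenbasis

theorem Matrix.IsHermitian.exists_basis_mulVec_eq_smul {n : Type*} [Fintype n] [DecidableEq n]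
    {A : Matrix n n ℝ} (hA : A.IsHermitian) :
    ∃ b : Module.Basis n ℝ (n → ℝ), ∀ i, A *ᵥ b i = hA.eigenvalues i • b i :=
  ⟨hA.eigenvectorBasis.toBasis.map (WithLp.linearEquiv 2 ℝ (n → ℝ)), fun i => by
    simpa using hA.mulVec_eigenvectorBasis i⟩

theorem Matrix.IsHermitian.eigenvalues_ne_zero {n : Type*} [Fintype n] [DecidableEq n]
    {A : Matrix n n ℝ} (hA : A.IsHermitian) (hdet : IsUnit A.det) (i : n) :
    hA.eigenvalues i ≠ 0 := by
  rw [isUnit_iff_ne_zero, hA.det_eq_prod_eigenvalues, Finset.prod_ne_zero_iff] at hdet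
  simpa using hdet i (Finset.mem_univ i)

section Cutoff

variable {β : ℝ → ℝ}

theorem integral_eq_zero_of_nonpos (hβ0 : ∀ t ≤ (0:ℝ), β t = 0) {t : ℝ} (ht : t ≤ 0) :
    ∫ s in (0:ℝ)..t, β s = 0 := by
  rw [intervalIntegral.integral_congr (g := 0) fun s hs => hβ0 s ?_]
  · simp
  · rw [uIcc_of_ge ht] at hs
    exact hs.2

theorem integral_eq_add_sub_one (hβc : Continuous β) (hβ1 : ∀ t ≥ (1:ℝ), β t = 1) {t : ℝ}
    (ht : 1 ≤ t) : ∫ s in (0:ℝ)..t, β s = (∫ s in (0:ℝ)..1, β s) + (t - 1) := by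
  have h1 : ∫ s in (1:ℝ)..t, β s = t - 1 := by
    rw [intervalIntegral.integral_congr (g := 1) fun s hs => hβ1 s ?_]
    · simp
    · rw [uIcc_of_le ht] at hs
      exact hs.1
  rw [← intervalIntegral.integral_add_adjacent_intervals (hβc.intervalIntegrable 0 1)
    (hβc.intervalIntegrable 1 t), h1]

theorem bddBelow_range_integral (hβc : Continuous β) (hβ0 : ∀ t ≤ (0:ℝ), β t = 0)
    (hβ1 : ∀ t ≥ (1:ℝ), β t = 1) : BddBelow (range fun t => ∫ s in (0:ℝ)..t, β s) := by
  have hcont : Continuous fun t => ∫ s in (0:ℝ)..t, β s :=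
    intervalIntegral.continuous_primitive (μ := MeasureTheory.volume) hβc.intervalIntegrable 0
  obtain ⟨m, hm⟩ := isCompact_Icc.bddBelow_image (K := Icc (0:ℝ) 1) hcont.continuousOn
  refine ⟨m, forall_mem_range.2 fun t => ?_⟩
  rcases le_or_gt t 0 with ht0 | ht0
  · rw [integral_eq_zero_of_nonpos hβ0 ht0]
    simpa using hm (mem_image_of_mem _ (left_mem_Icc.2 zero_le_one))
  rcases le_or_gt t 1 with ht1 | ht1
  · exact hm (mem_image_of_mem _ ⟨ht0.le, ht1⟩)
  · rw [integral_eq_add_sub_one hβc hβ1 ht1.le]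
    have := hm (mem_image_of_mem _ (right_mem_Icc.2 zero_le_one))
    linarith

theorem not_bddAbove_range_integral (hβc : Continuous β) (hβ1 : ∀ t ≥ (1:ℝ), β t = 1) :
    ¬BddAbove (range fun t => ∫ s in (0:ℝ)..t, β s) := by
  rintro ⟨M, hM⟩
  have h := hM (mem_range_self (max 1 (M - (∫ s in (0:ℝ)..1, β s) + 2)))
  rw [integral_eq_add_sub_one hβc hβ1 (le_max_left ..)] at h
  linarith [le_max_right 1 (M - (∫ s in (0:ℝ)..1, β s) + 2)]

end Cutoff

theorem bounded_solutions_dimension_general (n : ℕ) (H : Matrix (Fin n) (Fin n) ℝ)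
    (hH : H.IsHermitian) (hinv : IsUnit H.det)
    (β : ℝ → ℝ) (hβc : Continuous β)
    (hβ0 : ∀ t ≤ (0:ℝ), β t = 0) (hβ1 : ∀ t ≥ (1:ℝ), β t = 1) :
    ∃ V : Submodule ℝ (ℝ → (Fin n → ℝ)),
      (V : Set (ℝ → (Fin n → ℝ))) =
        {x | (∀ t, HasDerivAt x (β t • H.mulVec (x t)) t) ∧ ∃ C, ∀ t, ‖x t‖ ≤ C} ∧
      Module.finrank ℝ V = (Finset.univ.filter fun i => hH.eigenvalues i < 0).card := by
  obtain ⟨b, hb⟩ := hH.exists_basis_mulVec_eq_smul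
  refine ⟨boundedSolutions β (mulVecLin H), rfl, ?_⟩
  exact finrank_boundedSolutions (b := b) hb (hH.eigenvalues_ne_zero hinv)
    (fun t => (hβc.integral_hasStrictDerivAt 0 t).hasDerivAt) intervalIntegral.integral_same
    (bddBelow_range_integral hβc hβ0 hβ1) (not_bddAbove_range_integral hβc hβ1)

/-- The bounded solutions of `x' = β(t)·H·x`, where `β` is a cut-off and `H` is
symmetric invertible, form a subspace of dimension equal to the number of
negative eigenvalues of `H`. -/
theorem bounded_solutions_dimension (n : ℕ) (H : Matrix (Fin n) (Fin n) ℝ)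
    (hH : H.IsHermitian) (hinv : IsUnit H.det)
    (β : ℝ → ℝ) (hβc : Continuous β) (hβ01 : ∀ t, β t ∈ Set.Icc (0:ℝ) 1)
    (hβ0 : ∀ t ≤ (0:ℝ), β t = 0) (hβ1 : ∀ t ≥ (1:ℝ), β t = 1) :
    ∃ V : Submodule ℝ (ℝ → (Fin n → ℝ)),
      (V : Set (ℝ → (Fin n → ℝ))) =
        {x | (∀ t, HasDerivAt x (β t • H.mulVec (x t)) t) ∧ ∃ C, ∀ t, ‖x t‖ ≤ C} ∧
      Module.finrank ℝ V = (Finset.univ.filter fun i => hH.eigenvalues i < 0).card :=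
  bounded_solutions_dimension_general n H hH hinv β hβc hβ0 hβ1
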